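/- arXiv:0807.2987 — 2 statements merged into one kernel-verified Lean document; each statement's English description precedes it below -/
import Mathlib

section
/- For every configuration ω ∈ Ω, every site z ∈ ℤ₊² and any two ω-optimal paths γ, γ' ∈ Γ_z, there exists an ω-optimal path γ'' ∈ Γ_z that is below both γ and γ'. -/
/-!
The pointwise minimum and maximum (by height) of two paths in `Γ_z` are again paths in `Γ_z`,
since at each step index both paths sit on the same antidiagonal `x + y = i`. Moreover the
minimum and the maximum together visit the same multiset of sites as the two paths, so
`ω(min) + ω(max) = ω(γ) + ω(γ')`. If `γ, γ'` are optimal, `ω(max)` is at most the optimum,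
hence `ω(min)` is at least the optimum: the minimum is an optimal path below both.
-/

open scoped NNReal

/-- A site of the lattice `ℤ²`. -/
abbrev Site : Type := ℤ × ℤ

/-- The positive quadrant `ℤ₊²`. -/
def posQuad : Set Site := {z : Site | 0 ≤ z.1 ∧ 0 ≤ z.2}

/-- An admissible (up-right) step. -/
def IsStep (u v : Site) : Prop := v = u + (1, 0) ∨ v = u + (0, 1)

/-- `γ` is an up-right path from `(0,0)` to `z`, i.e. `γ ∈ Γ_z`. -/
def IsPathTo (z : Site) (γ : List Site) : Prop :=
  γ.head? = some ((0, 0) : Site) ∧ γ.getLast? = some z ∧ γ.Chain' IsStep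

/-- The length `ω(γ) = Σ_{z ∈ γ} ω(z)` of a path `γ` under the configuration `ω`. -/
noncomputable def plen (ω : Site → ℝ) (γ : List Site) : ℝ := (γ.map ω).sum

/-- `γ ∈ Γ_z` is `ω`-optimal if its length is maximal over `Γ_z`. -/
def IsOptimal (ω : Site → ℝ) (z : Site) (γ : List Site) : Prop :=
  IsPathTo z γ ∧ ∀ γ' : List Site, IsPathTo z γ' → plen ω γ' ≤ plen ω γ

/-- `γ` is below `γ'`: at every step index, the second coordinate of the site of `γ`
is at most that of the corresponding site of `γ'`. -/
def Below (γ γ' : List Site) : Prop :=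
  ∀ (i : ℕ) (h : i < γ.length) (h' : i < γ'.length),
    (γ.get ⟨i, h⟩).2 ≤ (γ'.get ⟨i, h'⟩).2

/-- `γ` is the low-optimal path of `Γ_z`: it is `ω`-optimal and below every
`ω`-optimal path of `Γ_z`. -/
def IsLowOptimal (ω : Site → ℝ) (z : Site) (γ : List Site) : Prop :=
  IsOptimal ω z γ ∧ ∀ γ' : List Site, IsOptimal ω z γ' → Below γ γ'

open Classical in
/-- The low-optimal path `γ_z^ω` (an arbitrary default when it does not exist). -/
noncomputable def lowOpt (ω : Site → ℝ) (z : Site) : List Site :=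
  if h : ∃ γ : List Site, IsLowOptimal ω z γ then h.choose else []

/-- The vertex set `V(T_z^ω) = {z' ∈ ℤ₊² : z ∈ γ_{z'}^ω}` of the subtree rooted at `z`. -/
def treeV (ω : Site → ℝ) (z : Site) : Set Site :=
  {z' : Site | z' ∈ posQuad ∧ z ∈ lowOpt ω z'}

lemma isStep_iff {u v : Site} :
    IsStep u v ↔ v.1 + v.2 = u.1 + u.2 + 1 ∧ (v.2 = u.2 ∨ v.2 = u.2 + 1) := by
  simp only [IsStep, Prod.ext_iff, Prod.fst_add, Prod.snd_add]
  omega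

namespace IsPathTo

variable {z : Site} {γ : List Site}

lemma length_pos (hγ : IsPathTo z γ) : 0 < γ.length := by
  obtain ⟨hhead, -, -⟩ := hγ
  cases γ <;> simp_all

lemma getElem_zero (hγ : IsPathTo z γ) (h : 0 < γ.length) : γ[0] = ((0, 0) : Site) := by
  have hhead := hγ.1
  rwa [List.head?_eq_getElem?, List.getElem?_eq_getElem h, Option.some_inj] at hhead

lemma getElem_length_sub_one (hγ : IsPathTo z γ) (h : γ.length - 1 < γ.length) :
    γ[γ.length - 1] = z := by
  have hlast := hγ.2.1
  rwa [List.getLast?_eq_getElem?, List.getElem?_eq_getElem h, Option.some_inj] at hlast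

lemma isStep_getElem (hγ : IsPathTo z γ) {i : ℕ} (hi : i + 1 < γ.length) :
    IsStep γ[i] γ[i + 1] :=
  List.isChain_iff_getElem.mp hγ.2.2 i hi

lemma fst_add_snd_getElem (hγ : IsPathTo z γ) :
    ∀ i (h : i < γ.length), γ[i].1 + γ[i].2 = (i : ℤ)
  | 0, h => by simp [hγ.getElem_zero h]
  | i + 1, h => by
    have hstep := isStep_iff.mp (hγ.isStep_getElem h)
    have := hγ.fst_add_snd_getElem i (by omega)
    push_cast
    omega

lemma length_eq (hγ : IsPathTo z γ) : (γ.length : ℤ) = z.1 + z.2 + 1 := by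
  have hlast : γ.length - 1 < γ.length := by have := hγ.length_pos; omega
  have hsum := hγ.fst_add_snd_getElem _ hlast
  rw [hγ.getElem_length_sub_one hlast] at hsum
  omega

lemma length_eq_length {γ' : List Site} (hγ : IsPathTo z γ) (hγ' : IsPathTo z γ') :
    γ.length = γ'.length := by
  have := hγ.length_eq
  have := hγ'.length_eq
  omega

lemma zipWith {f : Site → Site → Site} (hidem : ∀ a, f a a = a)
    (hstep : ∀ a b a' b', a.1 + a.2 = b.1 + b.2 → IsStep a a' → IsStep b b' →
      IsStep (f a b) (f a' b'))
    {γ' : List Site} (hγ : IsPathTo z γ) (hγ' : IsPathTo z γ') :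
    IsPathTo z (List.zipWith f γ γ') := by
  have hlen := hγ.length_eq_length hγ'
  have hlenf : (List.zipWith f γ γ').length = γ.length := by
    rw [List.length_zipWith]; omega
  have hpos : 0 < (List.zipWith f γ γ').length := hlenf ▸ hγ.length_pos
  have hlast : (List.zipWith f γ γ').length - 1 < (List.zipWith f γ γ').length := by omega
  refine ⟨?_, ?_, ?_⟩
  · rw [List.head?_eq_getElem?, List.getElem?_eq_getElem hpos, List.getElem_zipWith,
      hγ.getElem_zero, hγ'.getElem_zero, hidem]
  · have hz : γ[γ.length - 1] = z := hγ.getElem_length_sub_one (by omega)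
    have hz' : γ'[γ'.length - 1] = z := hγ'.getElem_length_sub_one (by omega)
    rw [List.getLast?_eq_getElem?, List.getElem?_eq_getElem hlast, List.getElem_zipWith]
    simp only [hlenf, hlen] at hz ⊢
    rw [hz, hz', hidem]
  · refine List.isChain_iff_getElem.mpr fun i hi => ?_
    simp only [List.getElem_zipWith]
    have hlevel : γ[i].1 + γ[i].2 = γ'[i].1 + γ'[i].2 := by
      rw [hγ.fst_add_snd_getElem i (by omega), hγ'.fst_add_snd_getElem i (by omega)]
    exact hstep _ _ _ _ hlevel (hγ.isStep_getElem (by omega)) (hγ'.isStep_getElem (by omega))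

end IsPathTo

def lowerSite (a b : Site) : Site := if a.2 ≤ b.2 then a else b

def upperSite (a b : Site) : Site := if a.2 ≤ b.2 then b else a

lemma lowerSite_self (a : Site) : lowerSite a a = a := by simp [lowerSite]

lemma upperSite_self (a : Site) : upperSite a a = a := by simp [upperSite]

lemma snd_lowerSite_le_left (a b : Site) : (lowerSite a b).2 ≤ a.2 := by
  unfold lowerSite; split <;> omega

lemma snd_lowerSite_le_right (a b : Site) : (lowerSite a b).2 ≤ b.2 := by
  unfold lowerSite; split <;> omega

lemma isStep_lowerSite {a b a' b' : Site} (hab : a.1 + a.2 = b.1 + b.2)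
    (ha : IsStep a a') (hb : IsStep b b') : IsStep (lowerSite a b) (lowerSite a' b') := by
  rw [isStep_iff] at ha hb ⊢
  unfold lowerSite
  split <;> split <;> omega

lemma isStep_upperSite {a b a' b' : Site} (hab : a.1 + a.2 = b.1 + b.2)
    (ha : IsStep a a') (hb : IsStep b b') : IsStep (upperSite a b) (upperSite a' b') := by
  rw [isStep_iff] at ha hb ⊢
  unfold upperSite
  split <;> split <;> omega

lemma below_zipWith_lowerSite_left (γ γ' : List Site) :
    Below (List.zipWith lowerSite γ γ') γ := by
  intro i _ _
  simpa only [List.get_eq_getElem, List.getElem_zipWith] using snd_lowerSite_le_left _ _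

lemma below_zipWith_lowerSite_right (γ γ' : List Site) :
    Below (List.zipWith lowerSite γ γ') γ' := by
  intro i _ _
  simpa only [List.get_eq_getElem, List.getElem_zipWith] using snd_lowerSite_le_right _ _

lemma plen_zipWith_add_plen_zipWith (ω : Site → ℝ) {f g : Site → Site → Site}
    (hfg : ∀ a b, ω (f a b) + ω (g a b) = ω a + ω b) :
    ∀ {γ γ' : List Site}, γ.length = γ'.length →
      plen ω (List.zipWith f γ γ') + plen ω (List.zipWith g γ γ') = plen ω γ + plen ω γ'
  | [], [], _ => by simp [plen]
  | a :: γ, b :: γ', hlen => by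
    have ih := plen_zipWith_add_plen_zipWith ω hfg (γ := γ) (γ' := γ') (by simpa using hlen)
    simp only [plen, List.zipWith_cons_cons, List.map_cons, List.sum_cons] at ih ⊢
    linarith [hfg a b]

lemma apply_lowerSite_add_apply_upperSite (ω : Site → ℝ) (a b : Site) :
    ω (lowerSite a b) + ω (upperSite a b) = ω a + ω b := by
  unfold lowerSite upperSite; split <;> ring

lemma IsOptimal.of_le {ω : Site → ℝ} {z : Site} {γ ρ : List Site} (hγ : IsOptimal ω z γ)
    (hρ : IsPathTo z ρ) (hle : plen ω γ ≤ plen ω ρ) : IsOptimal ω z ρ :=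
  ⟨hρ, fun σ hσ => (hγ.2 σ hσ).trans hle⟩

theorem exists_optimal_below_general (ω : Site → ℝ)
    (z : Site) (γ γ' : List Site)
    (h : IsOptimal ω z γ) (h' : IsOptimal ω z γ') :
    ∃ γ'' : List Site, IsOptimal ω z γ'' ∧ Below γ'' γ ∧ Below γ'' γ' := by
  have hlower : IsPathTo z (List.zipWith lowerSite γ γ') :=
    h.1.zipWith lowerSite_self (fun _ _ _ _ => isStep_lowerSite) h'.1
  have hupper : IsPathTo z (List.zipWith upperSite γ γ') :=
    h.1.zipWith upperSite_self (fun _ _ _ _ => isStep_upperSite) h'.1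
  have hsum := plen_zipWith_add_plen_zipWith ω (apply_lowerSite_add_apply_upperSite ω)
    (h.1.length_eq_length h'.1)
  have hupper_le : plen ω (List.zipWith upperSite γ γ') ≤ plen ω γ := h.2 _ hupper
  have hγ'_le : plen ω γ' ≤ plen ω γ := h.2 _ h'.1
  exact ⟨_, h'.of_le hlower (by linarith), below_zipWith_lowerSite_left γ γ',
    below_zipWith_lowerSite_right γ γ'⟩

/-- For any two `ω`-optimal paths of `Γ_z` there is an `ω`-optimal path of `Γ_z`
below both of them. -/
theorem exists_optimal_below (ω : Site → ℝ) (hω : ∀ z : Site, 0 ≤ ω z)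
    (z : Site) (hz : z ∈ posQuad) (γ γ' : List Site)
    (h : IsOptimal ω z γ) (h' : IsOptimal ω z γ') :
    ∃ γ'' : List Site, IsOptimal ω z γ'' ∧ Below γ'' γ ∧ Below γ'' γ' :=
  exists_optimal_below_general ω z γ γ' h h'
end

section
/- Let μ be a Borel probability measure on [0,∞) and let ℙ be the product measure ⊗_{z∈ℤ²} μ on Ω. Let a ∈ ℤ₊² and let A ⊆ 𝕋 satisfy the growth property, with {ω : T_z^ω ∈ A} measurable for every z ∈ ℤ₊². Set Ω^a = {ω ∈ Ω : a belongs to both γ_{a+(1,0)}^ω and γ_{a+(0,1)}^ω} and assume ℙ(Ω^a) > 0. Then ℙ(T_{a+(1,1)} ∈ A | Ω^a) ≤ ℙ(T_{(1,1)} ∈ A). -/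
open scoped NNReal

/-- A (rooted) subtree of the last passage percolation tree, recorded by its root
and its vertex set. -/
structure LPPTree where
  root : Site
  verts : Set Site

/-- The subtree `T_z^ω` of the last passage percolation tree rooted at `z`. -/
def subtree (ω : Site → ℝ) (z : Site) : LPPTree := ⟨z, treeV ω z⟩

/-- The set `𝕋` of all subtrees `T_z^ω`, `z ∈ ℤ₊²`, `ω ∈ Ω`. -/
def TreeSet : Set LPPTree :=
  {T : LPPTree | ∃ (ω : Site → ℝ) (z : Site),
    (∀ s : Site, 0 ≤ ω s) ∧ z ∈ posQuad ∧ T = subtree ω z}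

/-- A set `A ⊆ 𝕋` satisfies the growth property if whenever `T ∈ A`, `T' ∈ 𝕋` and
`V(T) - r(T) ⊆ V(T') - r(T')`, then `T' ∈ A`. -/
def GrowthProperty (A : Set LPPTree) : Prop :=
  ∀ T ∈ A, ∀ T' ∈ TreeSet,
    (· - T.root) '' T.verts ⊆ (· - T'.root) '' T'.verts → T' ∈ A

/-- A point of the configuration space `Ω = [0,∞)^{ℤ²}`. -/
abbrev CfgNN : Type := Site → ℝ≥0

/-- The real-valued configuration associated to a point of `Ω`. -/
noncomputable def toCfg (ω : CfgNN) : Site → ℝ := fun z => (ω z : ℝ)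

/-- The translation operator `τ_a(ω) = ω(a + ·)` on `Ω`. -/
def shift (a : Site) (ω : CfgNN) : CfgNN := fun z => ω (a + z)

/-- The event `Ω^a = {ω ∈ Ω : a belongs to both γ_{a+(1,0)}^ω and γ_{a+(0,1)}^ω}`. -/
def OmegaSup (a : Site) : Set CfgNN :=
  {ω : CfgNN | a ∈ lowOpt (toCfg ω) (a + (1, 0)) ∧ a ∈ lowOpt (toCfg ω) (a + (0, 1))}

/-!
On `Ω^a`, the low-optimal path to any vertex `v` of `T_{a+(1,1)}^ω` enters `a + (1,1)` from
`a + (1,0)` or `a + (0,1)`, whose low-optimal paths pass through `a`; prefixes of low-optimal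
paths are low-optimal, so it passes through `a` as well. Its part from `a` on, translated by
`-a`, is the low-optimal path to `v - a` in the shifted environment `τ_a ω`, so
`V(T_{a+(1,1)}^ω) - (a+(1,1)) ⊆ V(T_{(1,1)}^{τ_a ω}) - (1,1)` and the growth property gives
`T_{(1,1)}^{τ_a ω} ∈ A`.

Adding a constant to the lengths of all paths to `z` does not change the low-optimal one, so
the weight of a site lying on every path to `z` (the origin or `z` itself) is irrelevant.
Hence `Ω^a` depends only on the weights in the rectangles below `a + (1,0)` and `a + (0,1)`,
minus these two corners, and `T_{(1,1)}^{τ_a ω}` only on the weights at sites `> a`. These sets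
are disjoint, so the two events are independent under the product measure, which is also
invariant under `τ_a`. Thus `ℙ(Ω^a, T_{a+(1,1)} ∈ A) ≤ ℙ(Ω^a) ℙ(T_{(1,1)} ∈ A)`.
-/

def IsPathFromTo (x z : Site) (γ : List Site) : Prop :=
  γ.head? = some x ∧ γ.getLast? = some z ∧ γ.IsChain IsStep

theorem isPathTo_iff_isPathFromTo {z : Site} {γ : List Site} :
    IsPathTo z γ ↔ IsPathFromTo 0 z γ :=
  Iff.rfl

theorem mem_posQuad_iff {z : Site} : z ∈ posQuad ↔ 0 ≤ z :=
  Iff.rfl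

namespace IsStep

variable {u v : Site}

theorem le (h : IsStep u v) : u ≤ v := by
  rcases h with rfl | rfl <;> simp [Prod.le_def]

theorem fst_add_snd_eq (h : IsStep u v) : v.1 + v.2 = u.1 + u.2 + 1 := by
  rcases h with rfl | rfl <;> (simp only [Prod.fst_add, Prod.snd_add]; ring)

theorem add_left (h : IsStep u v) (a : Site) : IsStep (a + u) (a + v) := by
  rcases h with rfl | rfl
  exacts [.inl (add_assoc a u _).symm, .inr (add_assoc a u _).symm]

theorem sub_right (h : IsStep u v) (a : Site) : IsStep (u - a) (v - a) := by
  rcases h with rfl | rfl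
  exacts [.inl (add_sub_right_comm u _ a), .inr (add_sub_right_comm u _ a)]

theorem eq_sub_or_eq_sub (h : IsStep u v) : u = v - (1, 0) ∨ u = v - (0, 1) := by
  rcases h with rfl | rfl <;> simp

end IsStep

namespace IsPathFromTo

variable {x y z : Site} {γ : List Site}

theorem start_mem (h : IsPathFromTo x z γ) : x ∈ γ := List.mem_of_mem_head? h.1

theorem end_mem (h : IsPathFromTo x z γ) : z ∈ γ := List.mem_of_getLast? h.2.1

theorem mem_Icc (h : IsPathFromTo x z γ) {s : Site} (hs : s ∈ γ) : s ∈ Set.Icc x z := by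
  have hle : γ.Pairwise (· ≤ ·) := (h.2.2.imp fun _ _ => IsStep.le).pairwise
  obtain ⟨l, rfl⟩ := List.head?_eq_some_iff.1 h.1
  obtain ⟨l', hl'⟩ := List.getLast?_eq_some_iff.1 h.2.1
  refine ⟨?_, ?_⟩
  · rcases List.mem_cons.1 hs with rfl | hs
    exacts [le_rfl, List.rel_of_pairwise_cons hle hs]
  · rw [hl'] at hle hs
    rcases List.mem_append.1 hs with hs | hs
    · exact (List.pairwise_append.1 hle).2.2 _ hs _ (List.mem_singleton_self z)
    · rw [List.mem_singleton.1 hs]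

theorem le (h : IsPathFromTo x z γ) : x ≤ z := (h.mem_Icc h.end_mem).1

theorem map_of_isStep (h : IsPathFromTo x z γ) (f : Site → Site)
    (hf : ∀ u v, IsStep u v → IsStep (f u) (f v)) : IsPathFromTo (f x) (f z) (γ.map f) :=
  ⟨by simp [h.1], by simp [h.2.1], List.isChain_map f |>.2 (h.2.2.imp fun {_ _} => hf _ _)⟩

theorem map_add (h : IsPathFromTo x z γ) (a : Site) :
    IsPathFromTo (a + x) (a + z) (γ.map (a + ·)) :=
  h.map_of_isStep _ fun _ _ hs => hs.add_left a

theorem map_sub (h : IsPathFromTo x z γ) (a : Site) :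
    IsPathFromTo (x - a) (z - a) (γ.map (· - a)) :=
  h.map_of_isStep _ fun _ _ hs => hs.sub_right a

end IsPathFromTo

theorem isPathFromTo_append_cons_iff {x y z : Site} {s r : List Site} :
    IsPathFromTo x z (s ++ y :: r) ↔ IsPathFromTo x y (s ++ [y]) ∧ IsPathFromTo y z (y :: r) := by
  unfold IsPathFromTo
  rw [List.isChain_split]
  cases s
  · simp
  · simp only [List.cons_append, List.head?_cons, Option.some.injEq, List.getLast?_cons,
      List.getLast?_append, Option.some_or, Option.getD_some, List.getLast?_nil, Option.getD_none,
      true_and]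
    tauto

theorem IsPathTo.getElem_fst_add_snd {z : Site} {γ : List Site} (h : IsPathTo z γ) :
    ∀ (i : ℕ) (hi : i < γ.length), γ[i].1 + γ[i].2 = i
  | 0, hi => by
    have h0 := h.1
    rw [List.head?_eq_getElem?, List.getElem?_eq_getElem hi, Option.some_inj] at h0
    simp [h0]
  | i + 1, hi => by
    rw [(List.isChain_iff_getElem.1 h.2.2 i hi).fst_add_snd_eq, h.getElem_fst_add_snd i (by omega)]
    push_cast
    ring

theorem IsPathTo.length_eq_s4 {z : Site} {γ : List Site} (h : IsPathTo z γ) :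
    (γ.length : ℤ) = z.1 + z.2 + 1 := by
  obtain ⟨l, rfl⟩ := List.getLast?_eq_some_iff.1 h.2.1
  have := h.getElem_fst_add_snd l.length (by simp)
  simp only [List.getElem_concat_length] at this
  simp [this]

theorem IsPathTo.nodup {z : Site} {γ : List Site} (h : IsPathTo z γ) : γ.Nodup := by
  refine List.nodup_iff_injective_get.2 fun i j hij => Fin.ext ?_
  have hi := h.getElem_fst_add_snd i i.2
  have hj := h.getElem_fst_add_snd j j.2
  simp only [List.get_eq_getElem] at hij
  rw [hij] at hi
  exact_mod_cast hi.symm.trans hj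

namespace Below

variable {l₁ l₂ l₁' l₂' : List Site}

theorem of_prefix (h : Below l₂ l₂') (h₁ : l₁ <+: l₂) (h₁' : l₁' <+: l₂') : Below l₁ l₁' :=
  fun i hi hi' => by
    simpa [List.get_eq_getElem, h₁.getElem, h₁'.getElem] using
      h i (hi.trans_le h₁.length_le) (hi'.trans_le h₁'.length_le)

theorem of_append_right (h : Below (l₁ ++ l₂) (l₁' ++ l₂')) (hl : l₁.length = l₁'.length) :
    Below l₂ l₂' := fun i hi hi' => by
  have := h (l₁.length + i) (by simp [hi]) (by simp [hl, hi'])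
  simpa [List.get_eq_getElem, List.getElem_append_right, hl] using this

theorem map_sub (h : Below l₁ l₁') (a : Site) :
    Below (l₁.map (· - a)) (l₁'.map (· - a)) := fun i hi hi' => by
  simpa using h i (by simpa using hi) (by simpa using hi')

end Below

theorem IsPathTo.eq_of_below {z : Site} {γ γ' : List Site} (h : IsPathTo z γ)
    (h' : IsPathTo z γ') (hb : Below γ γ') (hb' : Below γ' γ) : γ = γ' := by
  have hlen : γ.length = γ'.length := by have := h.length_eq_s4; have := h'.length_eq_s4; omega
  refine List.ext_getElem hlen fun i hi hi' => ?_
  have h2 : γ[i].2 = γ'[i].2 := le_antisymm (hb i hi hi') (hb' i hi' hi)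
  have h1 : γ[i].1 = γ'[i].1 := by
    have := h.getElem_fst_add_snd i hi; have := h'.getElem_fst_add_snd i hi'; omega
  exact Prod.ext h1 h2

theorem lowOpt_eq {ω : Site → ℝ} {z : Site} {γ : List Site} (h : IsLowOptimal ω z γ) :
    lowOpt ω z = γ := by
  have hex : ∃ γ, IsLowOptimal ω z γ := ⟨γ, h⟩
  rw [lowOpt, dif_pos hex]
  exact hex.choose_spec.1.1.eq_of_below h.1.1 (hex.choose_spec.2 γ h.1) (h.2 _ hex.choose_spec.1)

theorem mem_lowOpt_iff {ω : Site → ℝ} {z x : Site} :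
    x ∈ lowOpt ω z ↔ ∃ γ, IsLowOptimal ω z γ ∧ x ∈ γ := by
  refine ⟨fun hx => ?_, fun ⟨γ, hγ, hx⟩ => lowOpt_eq hγ ▸ hx⟩
  by_cases hex : ∃ γ, IsLowOptimal ω z γ
  · rw [lowOpt, dif_pos hex] at hx
    exact ⟨_, hex.choose_spec, hx⟩
  · simp [lowOpt, dif_neg hex] at hx

theorem plen_append (ω : Site → ℝ) (l₁ l₂ : List Site) :
    plen ω (l₁ ++ l₂) = plen ω l₁ + plen ω l₂ := by
  simp [plen]

theorem plen_map (ω : Site → ℝ) (f : Site → Site) (l : List Site) :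
    plen ω (l.map f) = plen (ω ∘ f) l := by
  simp [plen]

theorem IsLowOptimal.prefix {ω : Site → ℝ} {z y : Site} {s r : List Site}
    (h : IsLowOptimal ω z (s ++ y :: r)) : IsLowOptimal ω y (s ++ [y]) := by
  obtain ⟨hpre, hsuf⟩ := isPathFromTo_append_cons_iff.1 h.1.1
  have hplen : ∀ q, plen ω (q ++ y :: r) = plen ω (q ++ [y]) + plen ω r := fun q => by
    simp [plen, add_assoc]
  have hsplice : ∀ {q}, IsPathTo y (q ++ [y]) → IsPathTo z (q ++ y :: r) := fun hq =>
    isPathFromTo_append_cons_iff.2 ⟨hq, hsuf⟩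
  have hopt : IsOptimal ω y (s ++ [y]) := by
    refine ⟨hpre, fun p hp => ?_⟩
    obtain ⟨p, rfl⟩ := List.getLast?_eq_some_iff.1 hp.2.1
    have := h.1.2 _ (hsplice hp)
    rw [hplen, hplen] at this
    linarith
  refine ⟨hopt, fun q hq => ?_⟩
  obtain ⟨q, rfl⟩ := List.getLast?_eq_some_iff.1 hq.1.2.1
  have hqopt : IsOptimal ω z (q ++ y :: r) := by
    refine ⟨hsplice hq.1, fun p hp => ?_⟩
    have := h.1.2 p hp
    have := hq.2 _ hopt.1
    rw [hplen] at *
    linarith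
  exact (h.2 _ hqopt).of_prefix ⟨r, by simp⟩ ⟨r, by simp⟩

theorem IsLowOptimal.suffix {ω : Site → ℝ} {z y : Site} {s r : List Site}
    (h : IsLowOptimal ω z (s ++ y :: r)) :
    IsLowOptimal (fun x => ω (y + x)) (z - y) ((y :: r).map (· - y)) := by
  set ω' : Site → ℝ := fun x => ω (y + x)
  obtain ⟨hpre, hsuf⟩ := isPathFromTo_append_cons_iff.1 h.1.1
  have hpath : IsPathTo (z - y) ((y :: r).map (· - y)) := by
    rw [isPathTo_iff_isPathFromTo]
    simpa using hsuf.map_sub y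
  have hsplit : plen ω (s ++ y :: r) = plen ω s + plen ω' ((y :: r).map (· - y)) := by
    simp [ω', plen, Function.comp_def]
  have hlift : ∀ {q}, IsPathTo (z - y) q → ∃ r', q.map (y + ·) = y :: r' ∧
      IsPathTo z (s ++ y :: r') ∧ plen ω (s ++ y :: r') = plen ω s + plen ω' q := by
    intro q hq
    have hq' : IsPathFromTo y z (q.map (y + ·)) := by
      simpa using (isPathTo_iff_isPathFromTo.1 hq).map_add y
    obtain ⟨r', hr'⟩ := List.head?_eq_some_iff.1 hq'.1
    refine ⟨r', hr', isPathFromTo_append_cons_iff.2 ⟨hpre, hr' ▸ hq'⟩, ?_⟩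
    rw [← hr', plen_append, plen_map]
    rfl
  have hopt : IsOptimal ω' (z - y) ((y :: r).map (· - y)) := by
    refine ⟨hpath, fun q hq => ?_⟩
    obtain ⟨r', -, hp, hl⟩ := hlift hq
    have := h.1.2 _ hp
    linarith
  refine ⟨hopt, fun q hq => ?_⟩
  obtain ⟨r', hr', hp, hl⟩ := hlift hq.1
  have hqopt : IsOptimal ω z (s ++ y :: r') := by
    refine ⟨hp, fun p hp' => ?_⟩
    have := h.1.2 p hp'
    have := hq.2 _ hpath
    linarith
  have hb := (h.2 _ hqopt).of_append_right rfl
  rw [← hr'] at hb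
  simpa [Function.comp_def] using hb.map_sub y

theorem sub_mem_treeV_shift {a v : Site} (ha : a ∈ posQuad) {ω : CfgNN} (hω : ω ∈ OmegaSup a)
    (hv : v ∈ treeV (toCfg ω) (a + (1, 1))) : v - a ∈ treeV (toCfg (shift a ω)) (1, 1) := by
  obtain ⟨-, hmem⟩ := hv
  obtain ⟨γ, hγ, hγmem⟩ := mem_lowOpt_iff.1 hmem
  obtain ⟨s, r, rfl⟩ := List.append_of_mem hγmem
  obtain ⟨s, u, rfl⟩ : ∃ s' u, s = s' ++ [u] := by
    rcases List.eq_nil_or_concat s with rfl | ⟨s', u, rfl⟩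
    · have h0 := congrArg Prod.fst (Option.some_inj.1 hγ.1.1.1)
      have := ha.1
      simp only [Prod.fst_add] at h0
      omega
    · exact ⟨s', u, List.concat_eq_append ..⟩
  rw [List.append_assoc, List.singleton_append] at hγ
  have hstep : IsStep u (a + (1, 1)) := (List.isChain_append_cons_cons.1 hγ.1.1.2.2).2.1
  have hau : a ∈ lowOpt (toCfg ω) u := by
    rcases hstep.eq_sub_or_eq_sub with rfl | rfl
    · convert hω.2 using 3
      ext <;> simp
    · convert hω.1 using 3
      ext <;> simp
  rw [lowOpt_eq hγ.prefix] at hau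
  obtain ⟨t, t', ht⟩ := List.append_of_mem hau
  have hsuf := (show IsLowOptimal (toCfg ω) v (t ++ a :: (t' ++ (a + (1, 1)) :: r)) by
    rw [← List.singleton_append, ← List.append_assoc, ht] at hγ
    simpa using hγ).suffix
  refine ⟨mem_posQuad_iff.2 (isPathTo_iff_isPathFromTo.1 hsuf.1.1).le, ?_⟩
  rw [show toCfg (shift a ω) = fun x => toCfg ω (a + x) from rfl, lowOpt_eq hsuf]
  exact List.mem_map.2 ⟨a + (1, 1), by simp, by simp⟩

theorem subtree_shift_mem_of_mem {a : Site} (ha : a ∈ posQuad) {A : Set LPPTree}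
    (hA : GrowthProperty A) {ω : CfgNN} (hω : ω ∈ OmegaSup a)
    (hT : subtree (toCfg ω) (a + (1, 1)) ∈ A) : subtree (toCfg (shift a ω)) (1, 1) ∈ A := by
  refine hA _ hT _ ⟨_, _, fun s => (shift a ω s).2, ⟨zero_le_one, zero_le_one⟩, rfl⟩ ?_
  rintro _ ⟨v, hv, rfl⟩
  exact ⟨v - a, sub_mem_treeV_shift ha hω hv, sub_sub v a (1, 1)⟩

theorem plen_eq_add_of_forall_ne {ω ω' : Site → ℝ} {γ : List Site} {p : Site} (hγ : γ.Nodup)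
    (hp : p ∈ γ) (h : ∀ s ∈ γ, s ≠ p → ω' s = ω s) : plen ω' γ = plen ω γ + (ω' p - ω p) := by
  classical
  rw [plen, plen, ← List.sum_toFinset _ hγ, ← List.sum_toFinset _ hγ, ← sub_eq_iff_eq_add',
    ← Finset.sum_sub_distrib, Finset.sum_eq_single p]
  · exact fun s hs hsp => sub_eq_zero.2 (h s (List.mem_toFinset.1 hs) hsp)
  · exact fun hp' => absurd (List.mem_toFinset.2 hp) hp'

theorem lowOpt_congr {ω ω' : Site → ℝ} {z : Site} (c : ℝ)
    (h : ∀ γ, IsPathTo z γ → plen ω' γ = plen ω γ + c) : lowOpt ω' z = lowOpt ω z := by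
  have hopt : IsOptimal ω' z = IsOptimal ω z := by
    ext γ
    refine and_congr_right fun hγ => forall₂_congr fun γ' hγ' => ?_
    rw [h γ hγ, h γ' hγ', add_le_add_iff_right]
  have hlow : IsLowOptimal ω' z = IsLowOptimal ω z := by
    ext γ
    simp only [IsLowOptimal, hopt]
  unfold lowOpt
  rw [hlow]

theorem lowOpt_eq_of_eqOn {ω ω' : Site → ℝ} {z p : Site} (hp : p = 0 ∨ p = z)
    (h : ∀ s ∈ Set.Icc 0 z, s ≠ p → ω' s = ω s) : lowOpt ω' z = lowOpt ω z := by
  refine lowOpt_congr (ω' p - ω p) fun γ hγ => ?_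
  have hγ' := isPathTo_iff_isPathFromTo.1 hγ
  refine plen_eq_add_of_forall_ne hγ.nodup ?_ fun s hs => h s (hγ'.mem_Icc hs)
  rcases hp with rfl | rfl
  exacts [hγ'.start_mem, hγ'.end_mem]

def omegaSupSites (a : Site) : Set Site :=
  (Set.Icc 0 (a + (1, 0)) ∪ Set.Icc 0 (a + (0, 1))) \ {a + (1, 0), a + (0, 1)}

theorem disjoint_omegaSupSites_Ioi (a : Site) : Disjoint (omegaSupSites a) (Set.Ioi a) := by
  refine Set.disjoint_left.2 fun s hs has => ?_
  simp only [omegaSupSites, Set.mem_sdiff, Set.mem_union, Set.mem_Icc, Set.mem_insert_iff,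
    Set.mem_singleton_iff, Set.mem_Ioi, Prod.le_def, Prod.lt_iff, Prod.ext_iff,
    Prod.fst_add, Prod.snd_add, Prod.fst_zero, Prod.snd_zero] at hs has
  omega

theorem omegaSup_dependsOn (a : Site) : DependsOn (· ∈ OmegaSup a) (omegaSupSites a) := by
  intro ω ω' h
  have key : ∀ b ∈ ({a + (1, 0), a + (0, 1)} : Set Site),
      lowOpt (toCfg ω) b = lowOpt (toCfg ω') b := by
    refine fun b hb => lowOpt_eq_of_eqOn (.inr rfl) fun s hs hsb => congrArg NNReal.toReal (h s ?_)
    simp only [omegaSupSites, Set.mem_sdiff, Set.mem_union, Set.mem_Icc, Set.mem_insert_iff,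
      Set.mem_singleton_iff, ne_eq, Prod.le_def, Prod.ext_iff, Prod.fst_add, Prod.snd_add,
      Prod.fst_zero, Prod.snd_zero] at hb hs hsb ⊢
    omega
  simp only [OmegaSup, Set.mem_ofPred_eq, key _ (.inl rfl), key _ (.inr rfl)]

theorem subtree_shift_dependsOn (a z : Site) :
    DependsOn (fun ω : CfgNN => subtree (toCfg (shift a ω)) z) (Set.Ioi a) := by
  intro ω ω' h
  have key : ∀ z', lowOpt (toCfg (shift a ω)) z' = lowOpt (toCfg (shift a ω')) z' :=
    fun z' => lowOpt_eq_of_eqOn (.inl rfl) fun s hs hs0 =>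
      congrArg NNReal.toReal (h (a + s) (lt_add_of_pos_right a (hs.1.lt_of_ne' hs0)))
  simp only [subtree, treeV, key]

open MeasureTheory

theorem measurable_plen (γ : List Site) : Measurable fun ω : CfgNN => plen (toCfg ω) γ := by
  induction γ with
  | nil => exact measurable_const
  | cons x l ih =>
    simp only [plen, List.map_cons, List.sum_cons] at ih ⊢
    exact (measurable_pi_apply x).coe_nnreal_real.add ih

theorem measurable_isOptimal (z : Site) (γ : List Site) :
    Measurable fun ω : CfgNN => IsOptimal (toCfg ω) z γ :=
  measurable_const.and <| Measurable.forall fun γ' => measurable_const.imp <|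
    measurableSet_setOfPred.1 (measurableSet_le (measurable_plen γ') (measurable_plen γ))

theorem measurable_isLowOptimal (z : Site) (γ : List Site) :
    Measurable fun ω : CfgNN => IsLowOptimal (toCfg ω) z γ :=
  (measurable_isOptimal z γ).and <| Measurable.forall fun γ' =>
    (measurable_isOptimal z γ').imp measurable_const

theorem measurable_mem_lowOpt (x z : Site) :
    Measurable fun ω : CfgNN => x ∈ lowOpt (toCfg ω) z := by
  simp_rw [mem_lowOpt_iff]
  exact Measurable.exists fun γ => (measurable_isLowOptimal z γ).and measurable_const

theorem measurableSet_omegaSup (a : Site) : MeasurableSet (OmegaSup a) :=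
  measurableSet_setOfPred.2 ((measurable_mem_lowOpt _ _).and (measurable_mem_lowOpt _ _))

theorem measurable_shift (a : Site) : Measurable (shift a) :=
  measurable_pi_lambda _ fun z => measurable_pi_apply (a + z)

namespace MeasureTheory

variable {ι : Type*} {X : ι → Type*} [∀ i, MeasurableSpace (X i)]

theorem measurableSet_iSup_comap_eval_of_dependsOn {S : Set ι} {G : Set (Π i, X i)}
    (hG : MeasurableSet G) (hdep : DependsOn (· ∈ G) S) :
    MeasurableSet[⨆ i ∈ S, MeasurableSpace.comap (fun ω : Π i, X i => ω i) inferInstance] G := by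
  classical
  rcases isEmpty_or_nonempty (Π i, X i) with _ | ⟨⟨ω₀⟩⟩
  · rw [Set.eq_empty_of_isEmpty G]
    exact MeasurableSpace.measurableSet_empty _
  let extend : (Π i : S, X i) → Π i, X i := fun f i => if h : i ∈ S then f ⟨i, h⟩ else ω₀ i
  have hle : MeasurableSpace.comap S.domRestrict MeasurableSpace.pi ≤
      ⨆ i ∈ S, MeasurableSpace.comap (fun ω : Π i, X i => ω i) inferInstance := by
    simp_rw [MeasurableSpace.pi, MeasurableSpace.comap_iSup, MeasurableSpace.comap_comp]
    exact iSup_le fun i =>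
      le_iSup₂ (f := fun i _ => MeasurableSpace.comap (fun ω : Π i, X i => ω i) inferInstance)
        i.1 i.2
  have hextend : Measurable extend := measurable_pi_lambda _ fun i => by
    by_cases hi : i ∈ S
    · simpa [extend, hi] using measurable_pi_apply (⟨i, hi⟩ : S)
    · simp [extend, hi]
  have hG' : G = S.domRestrict ⁻¹' (extend ⁻¹' G) := by
    ext ω
    exact iff_of_eq (hdep fun i hi => by simp [extend, hi, Set.domRestrict_apply])
  exact hle _ ⟨_, hextend hG, hG'.symm⟩

open ProbabilityTheory in
theorem Measure.infinitePi_inter_eq_mul_of_dependsOn (μ : (i : ι) → Measure (X i))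
    [∀ i, IsProbabilityMeasure (μ i)] {S T : Set ι} (hST : Disjoint S T)
    {E F : Set (Π i, X i)} (hE : MeasurableSet E) (hF : MeasurableSet F)
    (hEdep : DependsOn (· ∈ E) S) (hFdep : DependsOn (· ∈ F) T) :
    infinitePi μ (E ∩ F) = infinitePi μ E * infinitePi μ F := by
  have hindep : iIndep (fun i => MeasurableSpace.comap (fun ω : Π i, X i => ω i) inferInstance)
      (infinitePi μ) :=
    (iIndepFun_iff_iIndep _ _ _).1 (iIndepFun_infinitePi (X := fun _ => id) fun _ => measurable_id)
  exact (Indep_iff _ _ _).1 (indep_iSup_of_disjoint (fun i => (measurable_pi_apply i).comap_le)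
    hindep hST) E F (measurableSet_iSup_comap_eval_of_dependsOn hE hEdep)
    (measurableSet_iSup_comap_eval_of_dependsOn hF hFdep)

theorem Measure.infinitePi_map_comp_equiv {β : Type*} [MeasurableSpace β] (μ : Measure β)
    [IsProbabilityMeasure μ] (e : ι ≃ ι) :
    (infinitePi fun _ : ι => μ).map (· ∘ e) = infinitePi fun _ => μ := by
  have he : (· ∘ e) = ⇑(MeasurableEquiv.piCongrLeft (fun _ : ι => β) e.symm) := by
    funext f i
    conv_rhs => rw [← e.symm_apply_apply i]
    rw [MeasurableEquiv.coe_piCongrLeft, Equiv.piCongrLeft_apply_apply]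
    rfl
  rw [he]
  exact infinitePi_map_piCongrLeft (fun _ => μ) e.symm

end MeasureTheory

theorem stochastic_domination_product_general (μ : Measure ℝ≥0) [IsProbabilityMeasure μ]
    (ℙ : Measure CfgNN) [IsProbabilityMeasure ℙ]
    (hprod : ∀ (s : Finset Site) (t : Site → Set ℝ≥0), (∀ z ∈ s, MeasurableSet (t z)) →
      ℙ {ω : CfgNN | ∀ z ∈ s, ω z ∈ t z} = ∏ z ∈ s, μ (t z))
    (a : Site) (ha : a ∈ posQuad)
    (A : Set LPPTree) (hA : GrowthProperty A)
    (hmeas : ∀ z ∈ posQuad, MeasurableSet {ω : CfgNN | subtree (toCfg ω) z ∈ A})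
    (hpos : 0 < ℙ (OmegaSup a)) :
    ProbabilityTheory.cond ℙ (OmegaSup a)
        {ω : CfgNN | subtree (toCfg ω) (a + (1, 1)) ∈ A}
      ≤ ℙ {ω : CfgNN | subtree (toCfg ω) ((1, 1) : Site) ∈ A} := by
  have hℙ : ℙ = Measure.infinitePi fun _ => μ :=
    Measure.eq_infinitePi _ fun s t ht => hprod s t fun z _ => ht z
  set F₀ := {ω : CfgNN | subtree (toCfg ω) ((1, 1) : Site) ∈ A}
  have hF₀ : MeasurableSet F₀ := hmeas _ ⟨zero_le_one, zero_le_one⟩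
  have hindep : ℙ (OmegaSup a ∩ shift a ⁻¹' F₀) = ℙ (OmegaSup a) * ℙ (shift a ⁻¹' F₀) := by
    rw [hℙ]
    exact Measure.infinitePi_inter_eq_mul_of_dependsOn _ (disjoint_omegaSupSites_Ioi a)
      (measurableSet_omegaSup a) (measurable_shift a hF₀) (omegaSup_dependsOn a)
      fun ω ω' h => congrArg (· ∈ A) (subtree_shift_dependsOn a (1, 1) h)
  have hinv : ℙ (shift a ⁻¹' F₀) = ℙ F₀ := by
    rw [← Measure.map_apply (measurable_shift a) hF₀, hℙ]
    exact congrArg (· F₀) (Measure.infinitePi_map_comp_equiv μ (Equiv.addLeft a))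
  have hsub : OmegaSup a ∩ {ω | subtree (toCfg ω) (a + (1, 1)) ∈ A} ⊆
      OmegaSup a ∩ shift a ⁻¹' F₀ :=
    fun ω hω => ⟨hω.1, subtree_shift_mem_of_mem ha hA hω.1 hω.2⟩
  rw [ProbabilityTheory.cond_apply (measurableSet_omegaSup a)]
  calc (ℙ (OmegaSup a))⁻¹ * ℙ (OmegaSup a ∩ {ω | subtree (toCfg ω) (a + (1, 1)) ∈ A})
      ≤ (ℙ (OmegaSup a))⁻¹ * ℙ (OmegaSup a ∩ shift a ⁻¹' F₀) :=
        mul_le_mul_right (measure_mono hsub) _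
    _ = ℙ F₀ := by
        rw [hindep, ENNReal.inv_mul_cancel_left hpos.ne' (measure_ne_top _ _), hinv]

/-- Theorem 2, second part: if `ℙ` is the product measure `⊗_{z ∈ ℤ²} μ`, then
`ℙ(T_{a+(1,1)} ∈ A ∣ Ω^a) ≤ ℙ(T_{(1,1)} ∈ A)`. -/
theorem stochastic_domination_product (μ : Measure ℝ≥0) [IsProbabilityMeasure μ]
    (ℙ : Measure CfgNN) [IsProbabilityMeasure ℙ]
    (hprod : ∀ (s : Finset Site) (t : Site → Set ℝ≥0), (∀ z ∈ s, MeasurableSet (t z)) →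
      ℙ {ω : CfgNN | ∀ z ∈ s, ω z ∈ t z} = ∏ z ∈ s, μ (t z))
    (a : Site) (ha : a ∈ posQuad)
    (A : Set LPPTree) (hA_sub : A ⊆ TreeSet) (hA : GrowthProperty A)
    (hmeas : ∀ z ∈ posQuad, MeasurableSet {ω : CfgNN | subtree (toCfg ω) z ∈ A})
    (hpos : 0 < ℙ (OmegaSup a)) :
    ProbabilityTheory.cond ℙ (OmegaSup a)
        {ω : CfgNN | subtree (toCfg ω) (a + (1, 1)) ∈ A}
      ≤ ℙ {ω : CfgNN | subtree (toCfg ω) ((1, 1) : Site) ∈ A} :=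
  stochastic_domination_product_general μ ℙ hprod a ha A hA hmeas hpos
end
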